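/- Let z be a nonzero real number, let a be a real number that is not a nonpositive integer, and let d ≥ 1 be an integer. Let c(d) be the d-th iterated derivative at 0 of f_{a,z}(x) = exp(−z − (a−1)x + z·e^x). Then there exists a polynomial q with real coefficients such that for every integer n ≥ 0, ∑_{k=0}^{n−1} (k^d − c(d))·z^k / a^{(k)} = q(n)·z^n / a^{(n)} − q(0). -/

import Mathlib

/-- Rising factorial `a^{(k)} = a (a+1) ⋯ (a+k-1)` of a real number. -/
def risingFactorial (a : ℝ) : ℕ → ℝ
  | 0 => 1
  | k + 1 => risingFactorial a k * (a + k)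

/-!
The sum telescopes as soon as `z q(n+1) - (n+a) q(n) = (n+a)(n^d - c(d))` for all `n`.
The operator `q ↦ z q(X+1) - (X+a) q` raises degrees by exactly one, so together with the
multiples of `X + a` it reaches every polynomial; this produces `q` with some constant `γ` in
place of `c(d)`. The constant is forced: `f_{a,z}` is the moment generating function of `K + 1 - a`
for `K` Poisson of mean `z`, so `c(n) = E[(K + 1 - a)^n]`, and the Poisson identity
`E[K g(K)] = z E[g(K+1)]`, read off from `f' = (1 - a) f + z eˣ f`, makes the functional
`p ↦ E[p(K + 1 - a)]` send the two sides of the polynomial identity to values differing by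
`z (c(d) - γ)`.
-/

open Polynomial Finset Real

lemma Polynomial.mem_of_forall_X_pow_mem {R : Type*} [Semiring R] {S : Submodule R R[X]}
    {p : R[X]} {n : ℕ} (hp : p.natDegree < n) (hS : ∀ j < n, X ^ j ∈ S) : p ∈ S := by
  rw [as_sum_range' p n hp]
  exact S.sum_mem fun j hj => by
    rw [← smul_X_eq_monomial]; exact S.smul_mem _ (hS j (mem_range.mp hj))

section Field

variable {K : Type*} [Field K]

noncomputable def shiftDifference (z a : K) : K[X] →ₗ[K] K[X] :=
  z • taylor 1 - LinearMap.mulLeft K (X + C a)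

lemma shiftDifference_apply (z a : K) (q : K[X]) :
    shiftDifference z a q = z • taylor 1 q - (X + C a) * q := rfl

lemma range_shiftDifference_sup_span_eq_top {z : K} (hz : z ≠ 0) (a : K) :
    LinearMap.range (shiftDifference z a) ⊔ K ∙ (X + C a) = ⊤ := by
  set S := LinearMap.range (shiftDifference z a) ⊔ K ∙ (X + C a)
  have hD : ∀ q, shiftDifference z a q ∈ S := fun q =>
    Submodule.mem_sup_left (LinearMap.mem_range_self _ q)
  have hXa : X + C a ∈ S := Submodule.mem_sup_right (Submodule.mem_span_singleton_self _)
  have hpow : ∀ n, X ^ n ∈ S := by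
    intro n
    induction n using Nat.strong_induction_on with
    | _ n ih =>
      cases n with
      | zero =>
        have hone : (1 : K[X]) = z⁻¹ • shiftDifference z a 1 + z⁻¹ • (X + C a) := by
          rw [shiftDifference_apply, taylor_one, smul_sub, smul_smul, inv_mul_cancel₀ hz]
          simp
        rw [pow_zero, hone]
        exact S.add_mem (S.smul_mem _ (hD 1)) (S.smul_mem _ hXa)
      | succ m =>
        have hshift : taylor 1 (X ^ m) ∈ S := by
          refine mem_of_forall_X_pow_mem ?_ ih
          rw [natDegree_taylor, natDegree_X_pow]; exact Nat.lt_succ_self m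
        have hsucc : X ^ (m + 1) =
            z • taylor 1 (X ^ m) - shiftDifference z a (X ^ m) - a • X ^ m := by
          rw [shiftDifference_apply, smul_eq_C_mul a]; ring
        rw [hsucc]
        exact S.sub_mem (S.sub_mem (S.smul_mem _ hshift) (hD _))
          (S.smul_mem _ (ih m m.lt_succ_self))
  exact Submodule.eq_top_iff'.mpr fun p =>
    mem_of_forall_X_pow_mem p.natDegree.lt_succ_self fun j _ => hpow j

lemma exists_shiftDifference_eq {z : K} (hz : z ≠ 0) (a : K) (p : K[X]) :
    ∃ q : K[X], ∃ γ : K, shiftDifference z a q = (X + C a) * (p - C γ) := by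
  obtain ⟨_, ⟨q, rfl⟩, _, hγ, h⟩ :=
    Submodule.mem_sup.mp ((range_shiftDifference_sup_span_eq_top hz a).symm ▸
      Submodule.mem_top (x := (X + C a) * p))
  obtain ⟨γ, rfl⟩ := Submodule.mem_span_singleton.mp hγ
  refine ⟨q, γ, ?_⟩
  rw [smul_eq_C_mul] at h
  linear_combination h

noncomputable def momentFunctional (c : ℕ → K) : K[X] →ₗ[K] K :=
  lsum fun n => LinearMap.mulRight K (c n)

lemma momentFunctional_X_pow (c : ℕ → K) (n : ℕ) : momentFunctional c (X ^ n) = c n := by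
  simp [momentFunctional, X_pow_eq_monomial]

lemma momentFunctional_X_add_one_pow (c : ℕ → K) (n : ℕ) :
    momentFunctional c ((X + C 1) ^ n) = ∑ i ∈ range (n + 1), (n.choose i : K) * c i := by
  rw [add_pow, map_sum]
  refine sum_congr rfl fun i _ => ?_
  rw [C_1, one_pow, mul_one, ← C_eq_natCast, mul_comm, ← smul_eq_C_mul, map_smul,
    momentFunctional_X_pow, smul_eq_mul]

section MomentRecursion

variable {z a : K} {c : ℕ → K}
  (hc : ∀ n, c (n + 1) = (1 - a) * c n + z * ∑ i ∈ range (n + 1), (n.choose i : K) * c i)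
include hc

lemma momentFunctional_mul_X_add (p : K[X]) :
    momentFunctional c ((X + C (a - 1)) * p) = z * momentFunctional c (taylor 1 p) := by
  induction p using Polynomial.induction_on' with
  | add p q hp hq => rw [mul_add, map_add, map_add, map_add, hp, hq, mul_add]
  | monomial n r =>
    rw [← smul_X_eq_monomial, mul_smul_comm, map_smul, map_smul, map_smul, smul_eq_mul,
      smul_eq_mul, taylor_X_pow, momentFunctional_X_add_one_pow, add_mul, ← pow_succ',
      map_add, momentFunctional_X_pow, ← smul_eq_C_mul, map_smul, momentFunctional_X_pow, hc]
    ring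

lemma momentFunctional_taylor_mul_X_add (r : K[X]) :
    momentFunctional c (taylor (-1) ((X + C a) * r)) = z * momentFunctional c r := by
  have : taylor (-1) ((X + C a) * r) = (X + C (a - 1)) * taylor (-1) r := by
    rw [taylor_mul, map_add, taylor_X, taylor_C, sub_eq_add_neg a, C_add]; ring
  rw [this, momentFunctional_mul_X_add hc, taylor_taylor, add_neg_cancel, taylor_zero]

lemma eq_momentFunctional_of_shiftDifference_eq (hz : z ≠ 0) (hc0 : c 0 = 1) {γ : K}
    {p q : K[X]} (h : shiftDifference z a q = (X + C a) * (p - C γ)) :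
    γ = momentFunctional c p := by
  have hq : z • taylor 1 q = (X + C a) * (q + (p - C γ)) := by
    rw [shiftDifference_apply] at h; linear_combination h
  have hL := congrArg (fun r => momentFunctional c (taylor (-1) r)) hq
  have hC : C γ = γ • X ^ 0 := by rw [pow_zero, smul_eq_C_mul, mul_one]
  simp only [momentFunctional_taylor_mul_X_add hc, map_smul, taylor_taylor, neg_add_cancel,
    taylor_zero, smul_eq_mul, map_add, map_sub, hC, momentFunctional_X_pow, hc0] at hL
  linear_combination mul_left_cancel₀ hz hL

end MomentRecursion

end Field

/-- `E[exp (x (K + 1 - a))]` for `K` Poisson of mean `z`, i.e. `f_{a,z}`. -/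
noncomputable def shiftedPoissonMGF (z a : ℝ) (x : ℝ) : ℝ :=
  exp (-z - (a - 1) * x + z * exp x)

lemma contDiff_shiftedPoissonMGF (z a : ℝ) : ContDiff ℝ ⊤ (shiftedPoissonMGF z a) :=
  contDiff_exp.comp (by fun_prop)

lemma deriv_shiftedPoissonMGF (z a : ℝ) :
    deriv (shiftedPoissonMGF z a) =
      fun x => (1 - a) * shiftedPoissonMGF z a x + z * (shiftedPoissonMGF z a x * exp x) := by
  ext x
  have h : HasDerivAt (shiftedPoissonMGF z a)
      (shiftedPoissonMGF z a x * (-((a - 1) * 1) + z * exp x)) x :=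
    ((((hasDerivAt_id' x).const_mul (a - 1)).const_sub (-z)).add
      ((hasDerivAt_exp x).const_mul z)).exp
  rw [h.deriv]; ring

lemma iteratedDeriv_mul_exp {n : ℕ} {g : ℝ → ℝ} {x : ℝ} (hg : ContDiffAt ℝ n g x) :
    iteratedDeriv n (fun y => g y * exp y) x =
      (∑ i ∈ range (n + 1), (n.choose i : ℝ) * iteratedDeriv i g x) * exp x := by
  rw [iteratedDeriv_fun_mul hg contDiff_exp.contDiffAt, sum_mul]
  simp only [iteratedDeriv_eq_iterate, iter_deriv_exp]

lemma iteratedDeriv_succ_shiftedPoissonMGF_zero (z a : ℝ) (n : ℕ) :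
    iteratedDeriv (n + 1) (shiftedPoissonMGF z a) 0 =
      (1 - a) * iteratedDeriv n (shiftedPoissonMGF z a) 0 +
        z * ∑ i ∈ range (n + 1),
          (n.choose i : ℝ) * iteratedDeriv i (shiftedPoissonMGF z a) 0 := by
  have hf : ContDiff ℝ n (shiftedPoissonMGF z a) := (contDiff_shiftedPoissonMGF z a).of_le le_top
  rw [iteratedDeriv_succ', deriv_shiftedPoissonMGF,
    iteratedDeriv_fun_add (by fun_prop) (by fun_prop),
    iteratedDeriv_const_mul_field, iteratedDeriv_const_mul_field,
    iteratedDeriv_mul_exp hf.contDiffAt, exp_zero, mul_one]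

lemma risingFactorial_ne_zero {a : ℝ} (ha : ∀ m : ℕ, a ≠ -(m : ℝ)) (n : ℕ) :
    risingFactorial a n ≠ 0 := by
  induction n with
  | zero => exact one_ne_zero
  | succ n ih => exact mul_ne_zero ih fun h => ha n (by linarith)

lemma sum_range_mul_pow_div_risingFactorial {z a : ℝ} (ha : ∀ m : ℕ, a ≠ -(m : ℝ))
    (q : ℝ[X]) (g : ℕ → ℝ)
    (hq : ∀ k : ℕ, z * q.eval ((k : ℝ) + 1) - (a + k) * q.eval (k : ℝ) = (a + k) * g k)
    (n : ℕ) :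
    ∑ k ∈ range n, g k * z ^ k / risingFactorial a k =
      q.eval (n : ℝ) * z ^ n / risingFactorial a n - q.eval 0 := by
  have hF := sum_range_sub (fun k => q.eval (k : ℝ) * z ^ k / risingFactorial a k) n
  simp only [Nat.cast_zero, pow_zero, risingFactorial, div_one, mul_one] at hF
  rw [← hF]
  refine sum_congr rfl fun k _ => ?_
  have hk : a + (k : ℝ) ≠ 0 := fun h => ha k (by linarith)
  have hA := risingFactorial_ne_zero ha k
  rw [Nat.cast_succ]
  field_simp
  linear_combination (-(z ^ k)) * hq k

theorem stmt_6_general (z a : ℝ) (hz : z ≠ 0) (ha : ∀ m : ℕ, a ≠ -(m : ℝ)) (d : ℕ) :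
    ∃ q : Polynomial ℝ, ∀ n : ℕ,
      ∑ k ∈ Finset.range n,
          (((k : ℝ) ^ d -
              iteratedDeriv d (fun x : ℝ => Real.exp (-z - (a - 1) * x + z * Real.exp x)) 0) *
            z ^ k / risingFactorial a k) =
        q.eval (n : ℝ) * z ^ n / risingFactorial a n - q.eval 0 := by
  obtain ⟨q, γ, hq⟩ := exists_shiftDifference_eq hz a (X ^ d)
  have hγ : γ = iteratedDeriv d (shiftedPoissonMGF z a) 0 := by
    simpa only [momentFunctional_X_pow] using
      eq_momentFunctional_of_shiftDifference_eq (c := fun n => iteratedDeriv n _ 0)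
        (iteratedDeriv_succ_shiftedPoissonMGF_zero z a) hz (by simp [shiftedPoissonMGF]) hq
  refine ⟨q, sum_range_mul_pow_div_risingFactorial ha q _ fun k => ?_⟩
  change _ = _ * (_ - iteratedDeriv d (shiftedPoissonMGF z a) 0)
  simpa [shiftDifference_apply, taylor_eval, hγ, add_comm] using congrArg (eval (k : ℝ)) hq

theorem stmt_6 (z a : ℝ) (hz : z ≠ 0) (ha : ∀ m : ℕ, a ≠ -(m : ℝ)) (d : ℕ) (hd : 1 ≤ d) :
    ∃ q : Polynomial ℝ, ∀ n : ℕ,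
      ∑ k ∈ Finset.range n,
          (((k : ℝ) ^ d -
              iteratedDeriv d (fun x : ℝ => Real.exp (-z - (a - 1) * x + z * Real.exp x)) 0) *
            z ^ k / risingFactorial a k) =
        q.eval (n : ℝ) * z ^ n / risingFactorial a n - q.eval 0 :=
  stmt_6_general z a hz ha d
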